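/- Every third-order tensor M of size n1×n2×n3 over ℂ admits a t-SVD: there exist tensors U (n1×n1×n3), S (n1×n2×n3), V (n2×n2×n3) with U and V orthogonal with respect to the t-product (using conjugate tensor transpose), S f-diagonal (each frontal slice of its mode-3 DFT is a diagonal matrix with nonnegative real entries), such that M = U * S * Vᵀ'. -/

import Mathlib

open Finset Complex
open scoped ComplexOrder

/-- The root `ζ = exp(-2πi/n)` used in the mode-3 DFT. -/
noncomputable def dftRoot (n : ℕ) : ℂ := Complex.exp (-2 * Real.pi * Complex.I / n)

/-- Mode-3 DFT of a third-order tensor: `Â(i,j,ω) = ∑ k, A(i,j,k) ζ^{ωk}`. -/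
noncomputable def dft3 {n1 n2 n3 : ℕ} [NeZero n3]
    (A : Fin n1 → Fin n2 → ZMod n3 → ℂ) (i : Fin n1) (j : Fin n2) (w : ZMod n3) : ℂ :=
  ∑ k : ZMod n3, A i j k * dftRoot n3 ^ (w * k).val

/-- t-product of third-order complex tensors via circular convolution of tubes. -/
noncomputable def tProdC {n1 n2 n4 n3 : ℕ} [NeZero n3]
    (A : Fin n1 → Fin n2 → ZMod n3 → ℂ) (B : Fin n2 → Fin n4 → ZMod n3 → ℂ) :
    Fin n1 → Fin n4 → ZMod n3 → ℂ :=
  fun i j t => ∑ k : Fin n2, ∑ s : ZMod n3, A i k s * B k j (t - s)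

/-- Conjugate tensor transpose: `Aᵀ'(i,j,k) = conj (A(j,i,-k))`. -/
noncomputable def ctT {n1 n2 n3 : ℕ} (A : Fin n1 → Fin n2 → ZMod n3 → ℂ) :
    Fin n2 → Fin n1 → ZMod n3 → ℂ :=
  fun i j k => starRingEnd ℂ (A j i (-k))

/-- The identity tensor: `I(i,i,0) = 1` and zero elsewhere. -/
noncomputable def idTC (n n3 : ℕ) : Fin n → Fin n → ZMod n3 → ℂ :=
  fun i j k => if i = j ∧ k = 0 then 1 else 0

/-- A tensor `Q` is orthogonal if `Qᵀ' * Q = Q * Qᵀ' = I` in the t-product sense. -/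
noncomputable def IsOrthT {n n3 : ℕ} [NeZero n3] (Q : Fin n → Fin n → ZMod n3 → ℂ) : Prop :=
  tProdC (ctT Q) Q = idTC n n3 ∧ tProdC Q (ctT Q) = idTC n n3

/-- The `ω`-th frontal slice of the mode-3 DFT of a tensor. -/
noncomputable def sliceDFT {n1 n2 n3 : ℕ} [NeZero n3]
    (A : Fin n1 → Fin n2 → ZMod n3 → ℂ) (w : ZMod n3) : Matrix (Fin n1) (Fin n2) ℂ :=
  Matrix.of fun i j => dft3 A i j w

/-- Squared Frobenius norm of a third-order tensor. -/
noncomputable def frob2 {n1 n2 n3 : ℕ} [NeZero n3]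
    (A : Fin n1 → Fin n2 → ZMod n3 → ℂ) : ℝ :=
  ∑ i : Fin n1, ∑ j : Fin n2, ∑ k : ZMod n3, ‖A i j k‖ ^ 2

/-- Port helper: `Matrix.PosSemidef.sqrt` as defined in Mathlib of December 2024 (removed since). -/
noncomputable def Matrix.PosSemidef.sqrt {n : Type*} [Fintype n] [DecidableEq n] {𝕜 : Type*}
    [RCLike 𝕜] {A : Matrix n n 𝕜} (hA : A.PosSemidef) : Matrix n n 𝕜 :=
  (hA.1.eigenvectorUnitary : Matrix n n 𝕜) *
    Matrix.diagonal ((↑) ∘ Real.sqrt ∘ hA.1.eigenvalues) *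
    (star hA.1.eigenvectorUnitary : Matrix n n 𝕜)

/-- Nuclear norm of a matrix: sum of singular values, i.e. `Re (trace √(Mᴴ M))`. -/
noncomputable def nuclearNorm {m n : Type*} [Fintype m] [Fintype n] [DecidableEq n]
    (M : Matrix m n ℂ) : ℝ :=
  ((Matrix.posSemidef_conjTranspose_mul_self M).sqrt).trace.re

/-! The mode-3 DFT turns the t-product into slicewise matrix multiplication, the conjugate tensor
transpose into the slicewise conjugate transpose and the identity tensor into identity slices, and
it is invertible. A t-SVD is therefore obtained by taking a matrix SVD of every Fourier slice and
transforming back. The matrix SVD comes from the spectral theorem for `Aᴴ A`: its orthonormal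
eigenvectors `vⱼ` are mapped by `A` to pairwise orthogonal vectors of lengths `σⱼ`, which after
normalization extend to an orthonormal basis of left singular vectors. -/

open Module
open scoped InnerProductSpace Matrix

namespace LinearMap

variable {𝕜 : Type*} [RCLike 𝕜]
  {E : Type*} [NormedAddCommGroup E] [InnerProductSpace 𝕜 E] [FiniteDimensional 𝕜 E]
  {F : Type*} [NormedAddCommGroup F] [InnerProductSpace 𝕜 F] [FiniteDimensional 𝕜 F]
  (T : E →ₗ[𝕜] F)

lemma inner_apply_eigenvectorBasis {n : ℕ} (hn : finrank 𝕜 E = n) (j k : Fin n) :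
    ⟪T (T.isSymmetric_adjoint_comp_self.eigenvectorBasis hn j),
      T (T.isSymmetric_adjoint_comp_self.eigenvectorBasis hn k)⟫_𝕜 =
      if j = k then (T.singularValues k : 𝕜) ^ 2 else 0 := by
  rw [← adjoint_inner_right, ← comp_apply, IsSymmetric.apply_eigenvectorBasis, inner_smul_right,
    orthonormal_iff_ite.1 (IsSymmetric.eigenvectorBasis _ hn).orthonormal,
    ← sq_singularValues_fin T hn]
  split_ifs <;> simp

lemma lt_finrank_of_singularValues_ne_zero {k : ℕ} (hk : T.singularValues k ≠ 0) :
    k < finrank 𝕜 F :=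
  ((T.singularValues_pos_iff_lt_finrank_range).1
    ((T.singularValues_pos_iff_ne_zero k).2 hk)).trans_le (Submodule.finrank_le _)

theorem exists_orthonormalBasis_inner_apply_eigenvectorBasis {n m : ℕ} (hn : finrank 𝕜 E = n)
    (hm : finrank 𝕜 F = m) :
    ∃ u : OrthonormalBasis (Fin m) 𝕜 F, ∀ (i : Fin m) (j : Fin n),
      ⟪u i, T (T.isSymmetric_adjoint_comp_self.eigenvectorBasis hn j)⟫_𝕜 =
        if (i : ℕ) = j then (T.singularValues j : 𝕜) else 0 := by
  set v := T.isSymmetric_adjoint_comp_self.eigenvectorBasis hn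
  set σ := T.singularValues
  -- pad `v` with zeros, so that it is indexed by `ℕ` like `T.singularValues`
  set e : ℕ → E := fun k => if h : k < n then v ⟨k, h⟩ else 0 with he
  have hσ_of_le : ∀ k, n ≤ k → σ k = 0 := fun k hk =>
    T.singularValues_of_finrank_le (hn ▸ hk)
  have he_of_le : ∀ k, n ≤ k → e k = 0 := fun k hk => dif_neg (not_lt.2 hk)
  have he_inner : ∀ k l : ℕ,
      ⟪T (e k), T (e l)⟫_𝕜 = if k = l then (σ l : 𝕜) ^ 2 else 0 := by
    intro k l
    rcases lt_or_ge l n with hl | hl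
    · rcases lt_or_ge k n with hk | hk
      · simp only [he, dif_pos hk, dif_pos hl]
        exact (T.inner_apply_eigenvectorBasis hn _ _).trans (by simp [σ, Fin.ext_iff])
      · rw [he_of_le k hk, map_zero, inner_zero_left, if_neg (by omega)]
    · rw [he_of_le l hl, map_zero, inner_zero_right, hσ_of_le l hl]
      simp
  set s : Set (Fin m) := {i | σ i ≠ 0}
  set w : Fin m → F := fun i => (σ i : 𝕜)⁻¹ • T (e i)
  have hw : Orthonormal 𝕜 (s.domRestrict w) := by
    rw [orthonormal_iff_ite]
    rintro ⟨i, hi⟩ ⟨j, hj⟩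
    simp only [Set.domRestrict_apply, w, inner_smul_left, inner_smul_right, he_inner,
      Subtype.mk.injEq, Fin.ext_iff]
    split_ifs with hij
    · have hj' : (σ j : 𝕜) ≠ 0 := RCLike.ofReal_ne_zero.2 hj
      rw [hij, map_inv₀, RCLike.conj_ofReal]
      field_simp
    · simp
  obtain ⟨u, hu⟩ := hw.exists_orthonormalBasis_extension_of_card_eq (by simpa using hm)
  refine ⟨u, fun i j => ?_⟩
  have hvj : v j = e j := by simp [he, j.isLt]
  rw [hvj]
  by_cases hσ : σ j = 0
  · have : T (e j) = 0 := inner_self_eq_zero.1 (by rw [he_inner, if_pos rfl, hσ]; simp)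
    simp [this, hσ]
  · have hjm : (j : ℕ) < m := hm ▸ T.lt_finrank_of_singularValues_ne_zero hσ
    have : T (e j) = (σ j : 𝕜) • u ⟨j, hjm⟩ := by
      rw [hu ⟨j, hjm⟩ hσ, smul_inv_smul₀ (RCLike.ofReal_ne_zero.2 hσ)]
    rw [this, inner_smul_right, orthonormal_iff_ite.1 u.orthonormal]
    simp [Fin.ext_iff]

end LinearMap

namespace Matrix

variable {𝕜 : Type*} [RCLike 𝕜]

def rectDiagonal {α : Type*} [Zero α] {m n : ℕ} (d : ℕ → α) : Matrix (Fin m) (Fin n) α :=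
  of fun i j => if (i : ℕ) = j then d j else 0

theorem exists_svd {m n : ℕ} (A : Matrix (Fin m) (Fin n) 𝕜) :
    ∃ U ∈ unitaryGroup (Fin m) 𝕜, ∃ V ∈ unitaryGroup (Fin n) 𝕜, ∃ σ : ℕ → ℝ,
      (∀ k, 0 ≤ σ k) ∧
        A = U * (rectDiagonal fun k => (σ k : 𝕜) : Matrix (Fin m) (Fin n) 𝕜) * Vᴴ := by
  set T := toEuclideanLin A
  obtain ⟨u, hu⟩ := T.exists_orthonormalBasis_inner_apply_eigenvectorBasis
    finrank_euclideanSpace_fin finrank_euclideanSpace_fin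
  set v := T.isSymmetric_adjoint_comp_self.eigenvectorBasis finrank_euclideanSpace_fin
  set U := (EuclideanSpace.basisFun (Fin m) 𝕜).toBasis.toMatrix u.toBasis
  set V := (EuclideanSpace.basisFun (Fin n) 𝕜).toBasis.toMatrix v.toBasis
  have hU : U ∈ unitaryGroup (Fin m) 𝕜 :=
    (EuclideanSpace.basisFun (Fin m) 𝕜).toMatrix_orthonormalBasis_mem_unitary u
  have hV : V ∈ unitaryGroup (Fin n) 𝕜 :=
    (EuclideanSpace.basisFun (Fin n) 𝕜).toMatrix_orthonormalBasis_mem_unitary v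
  have hU_apply : ∀ i j, U i j = u j i := fun _ _ => rfl
  have hV_apply : ∀ i j, V i j = v j i := fun _ _ => rfl
  have hdiag : Uᴴ * A * V = rectDiagonal fun k => (T.singularValues k : 𝕜) := by
    ext i j
    rw [rectDiagonal, of_apply, ← hu i j]
    simp only [mul_apply, conjTranspose_apply, hU_apply, hV_apply, T,
      EuclideanSpace.inner_eq_star_dotProduct, dotProduct, ofLp_toLpLin, toLin'_apply, mulVec,
      Pi.star_apply, Finset.sum_mul]
    rw [Finset.sum_comm]
    exact Finset.sum_congr rfl fun k _ => Finset.sum_congr rfl fun l _ => by ring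
  refine ⟨U, hU, V, hV, T.singularValues, T.singularValues_nonneg, ?_⟩
  rw [← hdiag, ← Matrix.mul_assoc, ← Matrix.mul_assoc, ← star_eq_conjTranspose,
    mem_unitaryGroup_iff.1 hU, Matrix.one_mul, Matrix.mul_assoc, ← star_eq_conjTranspose,
    mem_unitaryGroup_iff.1 hV, Matrix.mul_one]

end Matrix

open ZMod

lemma dftRoot_pow_val (n : ℕ) [NeZero n] (x : ZMod n) :
    dftRoot n ^ x.val = stdAddChar (-x) := by
  have hx : -x = ((-(x.val : ℤ) : ℤ) : ZMod n) := by
    push_cast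
    rw [ZMod.natCast_val, ZMod.cast_id]
  rw [dftRoot, ← Complex.exp_nat_mul, hx, stdAddChar_coe]
  congr 1
  push_cast
  ring

section SliceDFT

variable {n1 n2 n3 : ℕ} [NeZero n3]

lemma sliceDFT_apply (A : Fin n1 → Fin n2 → ZMod n3 → ℂ) (w : ZMod n3) (i : Fin n1)
    (j : Fin n2) :
    sliceDFT A w i j = 𝓕 (A i j) w := by
  refine Finset.sum_congr rfl fun k _ => ?_
  rw [dftRoot_pow_val, smul_eq_mul, mul_comm, mul_comm w]

lemma sliceDFT_injective :
    Function.Injective (sliceDFT : (Fin n1 → Fin n2 → ZMod n3 → ℂ) → _) := by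
  intro A B h
  funext i j
  refine dft.injective (funext fun w => ?_)
  simpa only [sliceDFT_apply] using congr($h w i j)

noncomputable def ofSlices (F : ZMod n3 → Matrix (Fin n1) (Fin n2) ℂ) :
    Fin n1 → Fin n2 → ZMod n3 → ℂ :=
  fun i j => 𝓕⁻ (fun w => F w i j)

@[simp]
lemma sliceDFT_ofSlices (F : ZMod n3 → Matrix (Fin n1) (Fin n2) ℂ) :
    sliceDFT (ofSlices F) = F := by
  ext w i j
  rw [sliceDFT_apply, ofSlices, LinearEquiv.apply_symm_apply]

lemma sliceDFT_tProdC {n4 : ℕ} (A : Fin n1 → Fin n2 → ZMod n3 → ℂ)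
    (B : Fin n2 → Fin n4 → ZMod n3 → ℂ) (w : ZMod n3) :
    sliceDFT (tProdC A B) w = sliceDFT A w * sliceDFT B w := by
  ext i j
  simp only [sliceDFT_apply, Matrix.mul_apply, dft_apply, tProdC, Finset.smul_sum,
    Finset.sum_mul, Finset.mul_sum]
  rw [Finset.sum_comm]
  refine Finset.sum_congr rfl fun k _ => ?_
  rw [Finset.sum_comm]
  conv_rhs => rw [Finset.sum_comm]
  refine Finset.sum_congr rfl fun s _ => ?_
  refine Fintype.sum_equiv (Equiv.subRight s) _ _ fun t => ?_
  simp only [Equiv.subRight_apply, smul_eq_mul]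
  rw [show -(t * w) = -(s * w) + -((t - s) * w) by ring, AddChar.map_add_eq_mul]
  ring

lemma sliceDFT_ctT (A : Fin n1 → Fin n2 → ZMod n3 → ℂ) (w : ZMod n3) :
    sliceDFT (ctT A) w = (sliceDFT A w)ᴴ := by
  ext i j
  simp only [Matrix.conjTranspose_apply, sliceDFT_apply, dft_apply, ctT, star_sum, smul_eq_mul,
    star_mul', RCLike.star_def]
  refine Fintype.sum_equiv (Equiv.neg _) _ _ fun k => ?_
  rw [Equiv.neg_apply, ← AddChar.map_neg_eq_conj, neg_neg]
  ring_nf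

lemma sliceDFT_idTC (n : ℕ) (w : ZMod n3) : sliceDFT (idTC n n3) w = 1 := by
  ext i j
  rw [sliceDFT_apply, dft_apply,
    Finset.sum_eq_single 0 (fun k _ hk => by simp [idTC, hk]) (by simp)]
  by_cases h : i = j <;> simp [idTC, h, Matrix.one_apply]

lemma isOrthT_iff_sliceDFT_mem_unitaryGroup {n : ℕ} (Q : Fin n → Fin n → ZMod n3 → ℂ) :
    IsOrthT Q ↔ ∀ w, sliceDFT Q w ∈ Matrix.unitaryGroup (Fin n) ℂ := by
  simp only [IsOrthT, Unitary.mem_iff, Matrix.star_eq_conjTranspose, forall_and]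
  rw [← sliceDFT_injective.eq_iff, ← sliceDFT_injective.eq_iff]
  simp only [funext_iff, sliceDFT_tProdC, sliceDFT_ctT, sliceDFT_idTC]

end SliceDFT

/-- Existence of the t-SVD: every third-order tensor `M` factors as
`M = U * S * Vᵀ'` with `U`, `V` orthogonal (t-product, conjugate tensor transpose)
and `S` f-diagonal with nonnegative real Fourier-domain diagonal entries. -/
theorem tSVD_exists {n1 n2 n3 : ℕ} [NeZero n3]
    (M : Fin n1 → Fin n2 → ZMod n3 → ℂ) :
    ∃ (U : Fin n1 → Fin n1 → ZMod n3 → ℂ) (S : Fin n1 → Fin n2 → ZMod n3 → ℂ)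
      (V : Fin n2 → Fin n2 → ZMod n3 → ℂ),
      IsOrthT U ∧ IsOrthT V ∧
      (∀ (w : ZMod n3) (i : Fin n1) (j : Fin n2), (i : ℕ) ≠ (j : ℕ) → dft3 S i j w = 0) ∧
      (∀ (w : ZMod n3) (i : Fin n1) (j : Fin n2), (i : ℕ) = (j : ℕ) →
        (dft3 S i j w).im = 0 ∧ 0 ≤ (dft3 S i j w).re) ∧
      M = tProdC U (tProdC S (ctT V)) := by
  choose U hU V hV σ hσ hM using fun w => (sliceDFT M w).exists_svd
  refine ⟨ofSlices U, ofSlices fun w => Matrix.rectDiagonal fun k => (σ w k : ℂ), ofSlices V,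
    ?_, ?_, fun w i j hij => ?_, fun w i j hij => ?_, ?_⟩
  · rw [isOrthT_iff_sliceDFT_mem_unitaryGroup, sliceDFT_ofSlices]
    exact hU
  · rw [isOrthT_iff_sliceDFT_mem_unitaryGroup, sliceDFT_ofSlices]
    exact hV
  · change sliceDFT _ w i j = 0
    rw [sliceDFT_ofSlices]
    exact if_neg hij
  · change (sliceDFT _ w i j).im = 0 ∧ 0 ≤ (sliceDFT _ w i j).re
    simp [Matrix.rectDiagonal, hij, hσ]
  · refine sliceDFT_injective (funext fun w => ?_)
    simp only [sliceDFT_tProdC, sliceDFT_ctT, sliceDFT_ofSlices]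
    exact (hM w).trans (Matrix.mul_assoc _ _ _)
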